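/- arXiv:1610.01187 — 5 statements merged into one kernel-verified Lean document; each statement's English description precedes it below -/
import Mathlib

section
/- Let G be a group, let f, g : G → G, and let s ∈ G satisfy f(z) = g(z·s) for all z ∈ G. For a function h : G → G define Pₕ : G × G → G × G by Pₕ(x, y) = (x, y·h(x)). Then for all x₁, y₁, x₂, y₂ ∈ G and all (x, y) ∈ G × G, P_f((x, y)·(x₁, y₁))·(x₂, y₂) = P_g((x, y)·(x₁·s, y₁))·(s⁻¹·x₂, y₂). Equivalently, the Even-Mansour encryption map over G × G with permutation P_f and keys ((x₁, y₁), (x₂, y₂)) is identical, as a function, to the Even-Mansour encryption map with permutation P_g and keys ((x₁·s, y₁), (s⁻¹·x₂, y₂)). -/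
/-- **Key-recovery reduction identity for Even-Mansour over `G × G`.**
If `f z = g (z * s)` for all `z`, and `Pₕ (x, y) = (x, y * h x)`, then the
Even-Mansour encryption map over `G × G` with permutation `P_f` and keys
`((x₁, y₁), (x₂, y₂))` coincides with the one with permutation `P_g` and keys
`((x₁ * s, y₁), (s⁻¹ * x₂, y₂))`. -/
theorem evenMansour_keyRecovery_identity {G : Type*} [Group G]
    (f g : G → G) (s : G) (hshift : ∀ z : G, f z = g (z * s))
    (x₁ y₁ x₂ y₂ : G) :
    ∀ p : G × G,
      (fun q : G × G => (q.1, q.2 * f q.1)) (p * (x₁, y₁)) * (x₂, y₂) =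
      (fun q : G × G => (q.1, q.2 * g q.1)) (p * (x₁ * s, y₁)) * (s⁻¹ * x₂, y₂) := by
  intro p
  simp [Prod.ext_iff, hshift, mul_assoc]
end

section
/- Let G be an abelian additive group, R₁, R₂, R₃ : G → G, and α₀, α₁ ∈ G. For b ∈ {0, 1} define f_b : G → G by f_b(y) = (second component of (F_{R₃} ∘ F_{R₂} ∘ F_{R₁})(α_b, y)) − α_b. Then f_b(y) = R₂(y + R₁(α_b)) for all y, and consequently f₁(y) = f₀(y + R₁(α₁) − R₁(α₀)) for all y ∈ G; that is, f₀ and f₁ are shifts of each other by s = R₁(α₁) − R₁(α₀). -/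
/-- The one-round Feistel cipher with round function `f : G → G`. -/
def feistel {G : Type*} [AddGroup G] (f : G → G) : G × G → G × G :=
  fun p => (p.2 + f p.1, p.1)

/-- **Hidden-shift structure of the three-round Feistel cipher.**
With `f_b y = ((F_{R₃} ∘ F_{R₂} ∘ F_{R₁}) (α_b, y)).2 - α_b`, we have
`f_b y = R₂ (y + R₁ α_b)`, and hence `f₁ y = f₀ (y + R₁ α₁ - R₁ α₀)`:
`f₀` and `f₁` are shifts of each other by `s = R₁ α₁ - R₁ α₀`. -/
theorem threeRoundFeistel_hiddenShift {G : Type*} [AddCommGroup G]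
    (R₁ R₂ R₃ : G → G) (α₀ α₁ : G) :
    (∀ y : G, ((feistel R₃ ∘ feistel R₂ ∘ feistel R₁) (α₀, y)).2 - α₀ = R₂ (y + R₁ α₀)) ∧
    (∀ y : G, ((feistel R₃ ∘ feistel R₂ ∘ feistel R₁) (α₁, y)).2 - α₁ = R₂ (y + R₁ α₁)) ∧
    (∀ y : G, ((feistel R₃ ∘ feistel R₂ ∘ feistel R₁) (α₁, y)).2 - α₁ =
      ((feistel R₃ ∘ feistel R₂ ∘ feistel R₁) (α₀, y + R₁ α₁ - R₁ α₀)).2 - α₀) := by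
  refine ⟨fun y => ?_, fun y => ?_, fun y => ?_⟩ <;> simp [feistel]
end

section
/- Let G be an abelian additive group in which x + x = 0 for every x (exponent 2), let E, E' : G → G be functions, let α₀ ≠ α₁ ∈ G, and set s = E(α₀) + E(α₁). Define f : ℤ/2 × G → G by f(b, x) = E'(E(x + E(α_b))). Then f(b + 1, x + s) = f(b, x) for all b ∈ ℤ/2 and x ∈ G. In particular, the two-block Encrypted-CBC-MAC m₁‖m₂ ↦ E'(E(m₂ + E(m₁))) takes the same value on (α₀, x) and on (α₁, x + s) for every x ∈ G, yielding exponentially many collisions. -/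
/-- **Simon symmetry of the two-block Encrypted-CBC-MAC over a group of exponent 2.**
If `x + x = 0` for all `x ∈ G`, `α 0 ≠ α 1`, `s = E (α 0) + E (α 1)`, and
`f (b, x) = E' (E (x + E (α b)))`, then `f (b + 1, x + s) = f (b, x)` for all
`b : ZMod 2` and `x : G`. In particular the MAC takes the same value on
`(α 0, x)` and `(α 1, x + s)` for every `x`. -/
theorem cbcMac_simon_symmetry {G : Type*} [AddCommGroup G]
    (hexp : ∀ x : G, x + x = 0) (E E' : G → G) (α : ZMod 2 → G) (hα : α 0 ≠ α 1) :
    (∀ (b : ZMod 2) (x : G),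
        (fun p : ZMod 2 × G => E' (E (p.2 + E (α p.1)))) (b + 1, x + (E (α 0) + E (α 1))) =
        (fun p : ZMod 2 × G => E' (E (p.2 + E (α p.1)))) (b, x)) ∧
    (∀ x : G,
        E' (E (x + E (α 0))) = E' (E ((x + (E (α 0) + E (α 1))) + E (α 1)))) := by
  have key : ∀ x : G, x + (E (α 0) + E (α 1)) + E (α 1) = x + E (α 0) := by
    intro x
    have := hexp (E (α 1))
    rw [add_assoc, add_assoc, this, add_zero]
  have key' : ∀ x : G, x + (E (α 0) + E (α 1)) + E (α 0) = x + E (α 1) := by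
    intro x
    have h0 := hexp (E (α 0))
    calc x + (E (α 0) + E (α 1)) + E (α 0)
        = x + E (α 1) + (E (α 0) + E (α 0)) := by abel
      _ = x + E (α 1) := by rw [h0, add_zero]
  constructor
  · intro b x
    fin_cases b <;> simp only []
    · show E' (E (x + (E (α 0) + E (α 1)) + E (α ((0:ZMod 2) + 1)))) = E' (E (x + E (α 0)))
      norm_num
      rw [key]
    · show E' (E (x + (E (α 0) + E (α 1)) + E (α ((1:ZMod 2) + 1)))) = E' (E (x + E (α 1)))
      have : (1 : ZMod 2) + 1 = 0 := by decide
      rw [this, key']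
  · intro x
    rw [key]
end

section
/- Let G be a group, S a type, and f₀, f₁ : G → S functions with f₀(x) = f₁(x·s) for all x ∈ G, for some s ∈ G. Let K = (G × G) ⋊ ℤ/2 be the semidirect product in which the nontrivial element of ℤ/2 acts on G × G by swapping the two coordinates, and let σ = ((s, s⁻¹), 1) ∈ K. Define φ : K → S × S by φ((x, y), 0) = (f₀(x), f₁(y)) and φ((x, y), 1) = (f₁(x), f₀(y)). Then σ·σ is the identity of K, σ is not the identity, and φ(γ·σ) = φ(γ) for every γ ∈ K; that is, φ is constant on the left cosets of the order-two subgroup generated by σ. -/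
/-- The coordinate-swap automorphism of `G × G`. -/
def swapAut (G : Type*) [Group G] : MulAut (G × G) :=
  (MulEquiv.prodComm : G × G ≃* G × G)

lemma swapAut_mul_self (G : Type*) [Group G] : swapAut G * swapAut G = 1 := by
  ext p <;> rfl

/-- The action of `ℤ/2` on `G × G` in which the nontrivial element acts by
swapping the two coordinates (so `(G × G) ⋊[swapAction G] ℤ/2` is the wreath
product `G ≀ ℤ/2`). -/
def swapAction (G : Type*) [Group G] : Multiplicative (ZMod 2) →* MulAut (G × G) where
  toFun b := swapAut G ^ (Multiplicative.toAdd b).val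
  map_one' := by simp
  map_mul' a b := by
    have h2 : swapAut G ^ 2 = 1 := by
      rw [pow_two]; exact swapAut_mul_self G
    show swapAut G ^ (Multiplicative.toAdd a + Multiplicative.toAdd b).val = _
    rw [ZMod.val_add, ← pow_eq_pow_mod _ h2, pow_add]

/-- **Canonical reduction from Hidden Shift over `G` to Hidden Subgroup over
`G ≀ ℤ/2`: constancy on cosets.**  If `f₀ x = f₁ (x · s)` for all `x`, let
`σ = ((s, s⁻¹), 1)` in `K = (G × G) ⋊ ℤ/2` and `φ((x, y), 0) = (f₀ x, f₁ y)`,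
`φ((x, y), 1) = (f₁ x, f₀ y)`.  Then `σ · σ = 1`, `σ ≠ 1`, and
`φ (γ · σ) = φ γ` for every `γ ∈ K`. -/
theorem hiddenShift_to_wreath_hsp_constant {G S : Type*} [Group G]
    (f₀ f₁ : G → S) (s : G) (hshift : ∀ x : G, f₀ x = f₁ (x * s)) :
    let σ : (G × G) ⋊[swapAction G] Multiplicative (ZMod 2) :=
      ⟨(s, s⁻¹), Multiplicative.ofAdd 1⟩
    let φ : ((G × G) ⋊[swapAction G] Multiplicative (ZMod 2)) → S × S :=
      fun γ =>
        if Multiplicative.toAdd γ.right = 0 then (f₀ γ.left.1, f₁ γ.left.2)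
        else (f₁ γ.left.1, f₀ γ.left.2)
    σ * σ = 1 ∧ σ ≠ 1 ∧ ∀ γ, φ (γ * σ) = φ γ := by
  intro σ φ
  refine ⟨?_, ?_, ?_⟩
  · refine SemidirectProduct.ext ?_ ?_
    · show (s, s⁻¹) * (swapAction G) (Multiplicative.ofAdd 1) (s, s⁻¹) = 1
      have : (swapAction G) (Multiplicative.ofAdd 1) (s, s⁻¹) = (s⁻¹, s) := rfl
      rw [this]; simp [Prod.ext_iff]
    · show Multiplicative.ofAdd (1:ZMod 2) * Multiplicative.ofAdd 1 = 1
      decide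
  · intro h
    have : (Multiplicative.ofAdd (1 : ZMod 2)) = 1 := congrArg SemidirectProduct.right h
    exact absurd this (by decide)
  · intro γ
    obtain ⟨⟨x, y⟩, b⟩ := γ
    have hb : Multiplicative.toAdd b = 0 ∨ Multiplicative.toAdd b = 1 := by
      have : ∀ a : ZMod 2, a = 0 ∨ a = 1 := by decide
      exact this _
    have hmul : (⟨(x, y), b⟩ * σ : (G × G) ⋊[swapAction G] Multiplicative (ZMod 2))
        = ⟨(x, y) * swapAction G b (s, s⁻¹), b * Multiplicative.ofAdd 1⟩ := rfl
    rcases hb with h | h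
    · have hact : swapAction G b (s, s⁻¹) = (s, s⁻¹) := by
        show (swapAut G ^ (Multiplicative.toAdd b).val) (s, s⁻¹) = _
        rw [h]; rfl
      have hr : Multiplicative.toAdd (b * Multiplicative.ofAdd 1) = 1 := by
        show Multiplicative.toAdd b + 1 = 1
        rw [h, zero_add]
      simp only [φ, hmul, hact, hr, h, if_pos rfl, if_neg (by decide : (1:ZMod 2) ≠ 0)]
      show (f₁ (x * s), f₀ (y * s⁻¹)) = (f₀ x, f₁ y)
      rw [← hshift x]
      have := hshift (y * s⁻¹)
      rw [inv_mul_cancel_right] at this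
      rw [← this]
    · have hact : swapAction G b (s, s⁻¹) = (s⁻¹, s) := by
        show (swapAut G ^ (Multiplicative.toAdd b).val) (s, s⁻¹) = _
        rw [h]; rfl
      have hr : Multiplicative.toAdd (b * Multiplicative.ofAdd 1) = 0 := by
        show Multiplicative.toAdd b + 1 = 0
        rw [h]; decide
      simp only [φ, hmul, hact, hr, h, if_pos rfl, if_neg (by decide : (1:ZMod 2) ≠ 0)]
      show (f₀ (x * s⁻¹), f₁ (y * s)) = (f₁ x, f₀ y)
      rw [← hshift y]
      have := hshift (x * s⁻¹)
      rw [inv_mul_cancel_right] at this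
      rw [this]
end

section
/- Let G be a group, S a type, and f₀, f₁ : G → S injective functions with f₀(x) = f₁(x·s) for all x ∈ G, for some s ∈ G. Let K = (G × G) ⋊ ℤ/2 be the semidirect product in which the nontrivial element of ℤ/2 acts on G × G by swapping the two coordinates, let σ = ((s, s⁻¹), 1) ∈ K, and define φ : K → S × S by φ((x, y), 0) = (f₀(x), f₁(y)) and φ((x, y), 1) = (f₁(x), f₀(y)). Then for all γ, γ' ∈ K, φ(γ) = φ(γ') implies γ' = γ or γ' = γ·σ; that is, φ is distinct on distinct left cosets of the subgroup generated by σ. -/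
/-- **Canonical reduction from Hidden Shift over `G` to Hidden Subgroup over
`G ≀ ℤ/2`: distinctness on distinct cosets.**  If `f₀, f₁` are injective and
`f₀ x = f₁ (x · s)` for all `x`, let `σ = ((s, s⁻¹), 1)` in
`K = (G × G) ⋊ ℤ/2` and `φ((x, y), 0) = (f₀ x, f₁ y)`,
`φ((x, y), 1) = (f₁ x, f₀ y)`.  Then `φ γ = φ γ'` implies `γ' = γ` or
`γ' = γ · σ`. -/
theorem hiddenShift_to_wreath_hsp_distinct {G S : Type*} [Group G]
    (f₀ f₁ : G → S) (hf₀ : Function.Injective f₀) (hf₁ : Function.Injective f₁)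
    (s : G) (hshift : ∀ x : G, f₀ x = f₁ (x * s)) :
    let σ : (G × G) ⋊[swapAction G] Multiplicative (ZMod 2) :=
      ⟨(s, s⁻¹), Multiplicative.ofAdd 1⟩
    let φ : ((G × G) ⋊[swapAction G] Multiplicative (ZMod 2)) → S × S :=
      fun γ =>
        if Multiplicative.toAdd γ.right = 0 then (f₀ γ.left.1, f₁ γ.left.2)
        else (f₁ γ.left.1, f₀ γ.left.2)
    ∀ γ γ', φ γ = φ γ' → γ' = γ ∨ γ' = γ * σ := by
  intro σ φ γ γ' h
  have hz : ∀ z : ZMod 2, z = 0 ∨ z = 1 := by decide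
  obtain ⟨⟨x, y⟩, b⟩ := γ
  obtain ⟨⟨x', y'⟩, b'⟩ := γ'
  have hmul : ∀ (x y : G) (b : Multiplicative (ZMod 2)),
      (⟨(x, y), b⟩ * σ : (G × G) ⋊[swapAction G] Multiplicative (ZMod 2))
        = ⟨(x, y) * (swapAction G b) (s, s⁻¹), b * Multiplicative.ofAdd 1⟩ := by
    intro x y b; rfl
  rcases hz (Multiplicative.toAdd b) with hb | hb <;>
    rcases hz (Multiplicative.toAdd b') with hb' | hb' <;>
    simp only [φ, hb, hb'] at h <;>
    simp only [if_pos, if_neg, one_ne_zero] at h <;>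
    obtain ⟨h1, h2⟩ := Prod.mk.injEq .. ▸ h
  · left
    have hbb : b = b' := by
      have := congrArg Multiplicative.ofAdd (hb.trans hb'.symm); simpa using this
    exact SemidirectProduct.ext (by simp [hf₀ h1, hf₁ h2]) hbb.symm
  · -- b = 0, b' = 1 : x' = x * s, y' = y * s⁻¹
    right
    rw [hmul]
    refine SemidirectProduct.ext ?_ ?_
    · have hx : x' = x * s := (hf₁ ((hshift x).symm.trans h1)).symm
      have hy : y' = y * s⁻¹ := by
        have : f₁ y = f₁ (y' * s) := h2.trans (hshift y')
        have := hf₁ this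
        rw [this]; group
      show (x', y') = (x, y) * (swapAction G b) (s, s⁻¹)
      have hb1 : b = 1 := by
        have := congrArg Multiplicative.ofAdd hb; simpa using this
      rw [hb1]
      simp [swapAction, swapAut, hx, hy, Prod.ext_iff, ZMod.val_one, pow_one]
    · show b' = b * Multiplicative.ofAdd 1
      have : Multiplicative.toAdd (b * Multiplicative.ofAdd 1) = Multiplicative.toAdd b' := by
        simp [hb, hb']
      exact (Multiplicative.toAdd.injective this).symm
  · -- b = 1, b' = 0 : x' = x * s⁻¹, y' = y * s
    right
    rw [hmul]
    refine SemidirectProduct.ext ?_ ?_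
    · have hx : x' = x * s⁻¹ := by
        have : f₁ x = f₁ (x' * s) := h1.trans (hshift x')
        have := hf₁ this
        rw [this]; group
      have hy : y' = y * s := (hf₁ ((hshift y).symm.trans h2)).symm
      show (x', y') = (x, y) * (swapAction G b) (s, s⁻¹)
      have hb1 : b = Multiplicative.ofAdd 1 := by
        have := congrArg Multiplicative.ofAdd hb; simpa using this
      rw [hb1]
      simp [swapAction, swapAut, hx, hy, Prod.ext_iff, ZMod.val_one, pow_one]
    · show b' = b * Multiplicative.ofAdd 1
      have : Multiplicative.toAdd (b * Multiplicative.ofAdd 1) = Multiplicative.toAdd b' := by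
        simp [hb, hb']; decide
      exact (Multiplicative.toAdd.injective this).symm
  · left
    have hbb : b = b' := by
      have := congrArg Multiplicative.ofAdd (hb.trans hb'.symm); simpa using this
    exact SemidirectProduct.ext (by simp [hf₁ h1, hf₀ h2]) hbb.symm
end
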